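/- arXiv:2407.18859 — 6 statements merged into one kernel-verified Lean document; each statement's English description precedes it below -/
import Mathlib

section
/- For a complex number z with Re z < 0, the integral ∫_0^1 Φ(t) t^{-z-1} dt equals -ζ(1-z)/(z-1), where Φ(t) = t * ⌊1/t⌋ is the Ingham function. -/
/-!
Writing `Φ(t) t^{-z-1} = ⌊1/t⌋ t^{-z}` and `⌊1/t⌋ = #{n ≥ 1 : t ≤ 1/n}`, the integrand is the sum
over `n ≥ 1` of `t^{-z}` restricted to `(0, 1/n]`. For `Re z < 0` the norms of these layers have
summable integrals, so the integral may be taken termwise; the `n`-th layer contributes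
`n^{z-1}/(1-z)`, and summing gives `ζ(1-z)/(1-z)`.
-/

open MeasureTheory Set Complex

lemma mem_Ioc_zero_inv_add_one_iff {t : ℝ} (ht : 0 < t) (n : ℕ) :
    t ∈ Ioc 0 ((n : ℝ) + 1)⁻¹ ↔ n < ⌊t⁻¹⌋₊ := by
  rw [mem_Ioc, and_iff_right ht, le_inv_comm₀ ht (by positivity), ← Nat.add_one_le_iff,
    Nat.le_floor_iff (by positivity), Nat.cast_add_one]

lemma tsum_indicator_Ioc_zero_inv_add_one {M : Type*} [AddCommMonoid M] [TopologicalSpace M]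
    (f : ℝ → M) {t : ℝ} (ht : 0 < t) :
    ∑' n : ℕ, (Ioc 0 ((n : ℝ) + 1)⁻¹).indicator f t = ⌊t⁻¹⌋₊ • f t := by
  have h : ∀ n : ℕ, (Ioc 0 ((n : ℝ) + 1)⁻¹).indicator f t =
      if n ∈ Finset.range ⌊t⁻¹⌋₊ then f t else 0 := fun n => by
    simp only [indicator_apply, Finset.mem_range, mem_Ioc_zero_inv_add_one_iff ht]
  simp_rw [h]
  rw [tsum_eq_sum (s := Finset.range ⌊t⁻¹⌋₊) (fun n hn => if_neg hn), Finset.sum_ite_mem,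
    Finset.inter_self, Finset.sum_const, Finset.card_range]

lemma integral_Ioc_zero_cpow {s : ℂ} (hs : -1 < s.re) {a : ℝ} (ha : 0 ≤ a) :
    ∫ t in Ioc 0 a, (t : ℂ) ^ s = (a : ℂ) ^ (s + 1) / (s + 1) := by
  have hs1 : s + 1 ≠ 0 := ne_of_apply_ne re (by rw [add_re, one_re, zero_re]; linarith)
  rw [← intervalIntegral.integral_of_le ha, integral_cpow (Or.inl hs), ofReal_zero,
    zero_cpow hs1, sub_zero]

lemma integral_Ioc_zero_norm_cpow {s : ℂ} (hs : -1 < s.re) {a : ℝ} (ha : 0 ≤ a) :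
    ∫ t in Ioc 0 a, ‖(t : ℂ) ^ s‖ = a ^ (s.re + 1) / (s.re + 1) := by
  rw [setIntegral_congr_fun measurableSet_Ioc fun t ht => norm_cpow_eq_rpow_re_of_pos ht.1 s,
    ← intervalIntegral.integral_of_le ha, integral_rpow (Or.inl hs),
    Real.zero_rpow (by linarith), sub_zero]

lemma integrableOn_Ioc_zero_cpow {s : ℂ} (hs : -1 < s.re) (a : ℝ) :
    IntegrableOn (fun t : ℝ => (t : ℂ) ^ s) (Ioc 0 a) :=
  (intervalIntegral.intervalIntegrable_cpow' hs).1

lemma ofReal_inv_natCast_add_one_cpow (n : ℕ) (s : ℂ) :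
    ((((n : ℝ) + 1)⁻¹ : ℝ) : ℂ) ^ s = 1 / ((n : ℂ) + 1) ^ s := by
  have : ((n : ℂ) + 1).arg ≠ Real.pi := by
    rw [← Nat.cast_add_one, natCast_arg]; exact Real.pi_ne_zero.symm
  rw [ofReal_inv, ofReal_add, ofReal_natCast, ofReal_one, inv_cpow _ _ this, one_div]

lemma ofReal_mul_floor_inv_mul_cpow_sub_one {t : ℝ} (ht : 0 < t) (s : ℂ) :
    ((t * ⌊t⁻¹⌋ : ℝ) : ℂ) * (t : ℂ) ^ (s - 1) = ⌊t⁻¹⌋₊ * (t : ℂ) ^ s := by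
  have ht' : (t : ℂ) ≠ 0 := ofReal_ne_zero.2 ht.ne'
  rw [← natCast_floor_eq_intCast_floor (inv_nonneg.2 ht.le), cpow_sub _ _ ht', cpow_one]
  push_cast
  field_simp

theorem integral_Ioc_natFloor_inv_mul_cpow {s : ℂ} (hs : 0 < s.re) :
    ∫ t in Ioc (0 : ℝ) 1, (⌊t⁻¹⌋₊ : ℂ) * (t : ℂ) ^ s = riemannZeta (s + 1) / (s + 1) := by
  set F : ℕ → ℝ → ℂ := fun n => (Ioc 0 ((n : ℝ) + 1)⁻¹).indicator fun t => (t : ℂ) ^ s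
  have hs' : -1 < s.re := by linarith
  have hlayers : ∀ t ∈ Ioc (0 : ℝ) 1, (⌊t⁻¹⌋₊ : ℂ) * (t : ℂ) ^ s = ∑' n, F n t := fun t ht => by
    rw [tsum_indicator_Ioc_zero_inv_add_one _ ht.1, nsmul_eq_mul]
  have hsub : ∀ n : ℕ, Ioc (0 : ℝ) 1 ∩ Ioc 0 ((n : ℝ) + 1)⁻¹ = Ioc 0 ((n : ℝ) + 1)⁻¹ := fun n =>
    inter_eq_right.2 (Ioc_subset_Ioc_right (inv_le_one_of_one_le₀ (by simp)))
  have hint : ∀ n : ℕ, Integrable (F n) (volume.restrict (Ioc 0 1)) := fun n =>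
    ((integrableOn_Ioc_zero_cpow hs' _).integrable_indicator measurableSet_Ioc).integrableOn
  have hnorm : ∀ n : ℕ, ∫ t in Ioc (0 : ℝ) 1, ‖F n t‖ =
      ((n : ℝ) + 1)⁻¹ ^ (s.re + 1) / (s.re + 1) := fun n => by
    simp only [F, norm_indicator_eq_indicator_norm]
    rw [setIntegral_indicator measurableSet_Ioc, hsub,
      integral_Ioc_zero_norm_cpow hs' (by positivity)]
  have hsum : Summable fun n : ℕ => ∫ t in Ioc (0 : ℝ) 1, ‖F n t‖ := by
    simp_rw [hnorm]
    refine Summable.div_const ?_ _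
    refine ((Real.summable_one_div_nat_add_rpow 1 (s.re + 1)).2 (by linarith)).congr fun n => ?_
    rw [abs_of_pos (by positivity), Real.inv_rpow (by positivity), one_div]
  have hterm : ∀ n : ℕ, ∫ t in Ioc (0 : ℝ) 1, F n t = 1 / ((n : ℂ) + 1) ^ (s + 1) / (s + 1) :=
    fun n => by
    rw [setIntegral_indicator measurableSet_Ioc, hsub, integral_Ioc_zero_cpow hs' (by positivity),
      ofReal_inv_natCast_add_one_cpow]
  rw [setIntegral_congr_fun measurableSet_Ioc hlayers,
    ← integral_tsum_of_summable_integral_norm hint hsum, tsum_congr hterm, tsum_div_const,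
    ← zeta_eq_tsum_one_div_nat_add_one_cpow (by simpa using hs)]

theorem stmt_4 (z : ℂ) (hz : z.re < 0) :
    ∫ t in Set.Ioc (0:ℝ) 1, ((t * ⌊t⁻¹⌋ : ℝ) : ℂ) * (t : ℂ) ^ (-z - 1) =
      -riemannZeta (1 - z) / (z - 1) := by
  rw [setIntegral_congr_fun measurableSet_Ioc fun t ht =>
      ofReal_mul_floor_inv_mul_cpow_sub_one ht.1 (-z),
    integral_Ioc_natFloor_inv_mul_cpow (by simpa using hz), neg_add_eq_sub, neg_div, ← div_neg,
    neg_sub]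
end

section
/- Let β > 0 be real and let (a_n) be the unique sequence with a_1 = 1 satisfying ∑_{k=1}^n a_k (k/n)⌊n/k⌋ = n^{-β} for all n ≥ 2. Then n·a_n = ∑_{d ∣ n} μ(n/d)(d^{1-β} - (d-1)^{1-β}) for all n ≥ 2, where μ is the Möbius function. -/
/-!
Multiplying the defining relation by `n` and counting `⌊n/k⌋` as the number of multiples of `k`
up to `n` turns it into `∑_{m ≤ n} ∑_{d ∣ m} d a_d = n^{1-β}` for all `n ≥ 1`. Taking differences
in `n` gives `∑_{d ∣ n} d a_d = n^{1-β} - (n-1)^{1-β}`, and Möbius inversion gives the formula for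
`n a_n`.
-/

open Finset

theorem Nat.sum_Icc_div_smul_eq_sum_Icc_sum_divisors {M : Type*} [AddCommMonoid M]
    (f : ℕ → M) (n : ℕ) :
    ∑ k ∈ Icc 1 n, (n / k) • f k = ∑ m ∈ Icc 1 n, ∑ d ∈ m.divisors, f d := by
  rw [sum_comm' (t' := Icc 1 n) (s' := fun d => {m ∈ Icc 1 n | d ∣ m})]
  · refine sum_congr rfl fun d _ => ?_
    rw [sum_const, ← zero_add 1, Icc_add_one_left_eq_Ioc, Nat.Ioc_filter_dvd_card_eq_div]
  · intro m d
    simp only [Nat.mem_divisors, mem_filter, mem_Icc]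
    constructor
    · rintro ⟨⟨hm1, hmn⟩, hdm, -⟩
      exact ⟨⟨⟨hm1, hmn⟩, hdm⟩, Nat.pos_of_dvd_of_pos hdm hm1, (Nat.le_of_dvd hm1 hdm).trans hmn⟩
    · rintro ⟨⟨⟨hm1, hmn⟩, hdm⟩, -⟩
      exact ⟨⟨hm1, hmn⟩, hdm, by omega⟩

section

variable {β : ℝ} {a : ℕ → ℝ} (ha1 : a 1 = 1)
  (ha : ∀ n : ℕ, 2 ≤ n →
      ∑ k ∈ Finset.Icc 1 n, a k * ((k : ℝ) / n * (n / k : ℕ)) = (n : ℝ) ^ (-β))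
include ha1 ha

theorem sum_Icc_sum_divisors_mul_eq_rpow {n : ℕ} (hn : 1 ≤ n) :
    ∑ m ∈ Icc 1 n, ∑ d ∈ m.divisors, (d : ℝ) * a d = (n : ℝ) ^ (1 - β) := by
  rw [← Nat.sum_Icc_div_smul_eq_sum_Icc_sum_divisors]
  obtain rfl | hn2 := hn.eq_or_lt
  · simp [ha1]
  have hn0 : (n : ℝ) ≠ 0 := by positivity
  calc ∑ k ∈ Icc 1 n, (n / k) • ((k : ℝ) * a k)
      = n * ∑ k ∈ Icc 1 n, a k * ((k : ℝ) / n * (n / k : ℕ)) := by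
        rw [mul_sum]
        refine sum_congr rfl fun k _ => ?_
        rw [nsmul_eq_mul]
        field_simp
    _ = (n : ℝ) ^ (1 - β) := by
        rw [ha n hn2, sub_eq_neg_add, Real.rpow_add_one hn0, mul_comm]

theorem sum_divisors_mul_eq_rpow_sub_rpow {n : ℕ} (hn : 0 < n) :
    ∑ d ∈ n.divisors, (d : ℝ) * a d
      = (n : ℝ) ^ (1 - β) - if n = 1 then 0 else ((n : ℝ) - 1) ^ (1 - β) := by
  obtain ⟨m, rfl⟩ : ∃ m, n = m + 1 := ⟨n - 1, by omega⟩
  obtain rfl | hm := m.eq_zero_or_pos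
  · simp [ha1]
  have h := sum_Icc_sum_divisors_mul_eq_rpow ha1 ha (n := m + 1) (by omega)
  rw [sum_Icc_succ_top (by omega), sum_Icc_sum_divisors_mul_eq_rpow ha1 ha hm] at h
  rw [if_neg (by omega), Nat.cast_succ, add_sub_cancel_right]
  push_cast at h
  linarith

end

open ArithmeticFunction ArithmeticFunction.Moebius in
theorem stmt_6_general (β : ℝ) (a : ℕ → ℝ) (ha1 : a 1 = 1)
    (ha : ∀ n : ℕ, 2 ≤ n →
      ∑ k ∈ Finset.Icc 1 n, a k * ((k : ℝ) / n * (n / k : ℕ)) = (n : ℝ) ^ (-β)) :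
    ∀ n : ℕ, 2 ≤ n →
      (n : ℝ) * a n = ∑ d ∈ n.divisors, (μ (n / d) : ℝ) *
        ((d : ℝ) ^ (1 - β) - if d = 1 then 0 else ((d : ℝ) - 1) ^ (1 - β)) := by
  intro n hn
  rw [← Nat.sum_divisorsAntidiagonal' (fun i d => (μ i : ℝ) *
    ((d : ℝ) ^ (1 - β) - if d = 1 then 0 else ((d : ℝ) - 1) ^ (1 - β)))]
  exact (sum_eq_iff_sum_mul_moebius_eq.mp
    (fun m hm => sum_divisors_mul_eq_rpow_sub_rpow ha1 ha hm) n (by omega)).symm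

open ArithmeticFunction ArithmeticFunction.Moebius in
theorem stmt_6 (β : ℝ) (hβ : 0 < β) (a : ℕ → ℝ) (ha1 : a 1 = 1)
    (ha : ∀ n : ℕ, 2 ≤ n →
      ∑ k ∈ Finset.Icc 1 n, a k * ((k : ℝ) / n * (n / k : ℕ)) = (n : ℝ) ^ (-β)) :
    ∀ n : ℕ, 2 ≤ n →
      (n : ℝ) * a n = ∑ d ∈ n.divisors, (μ (n / d) : ℝ) *
        ((d : ℝ) ^ (1 - β) - if d = 1 then 0 else ((d : ℝ) - 1) ^ (1 - β)) :=
  stmt_6_general β a ha1 ha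
end

section
/- Let β > 0 and let (a_n) be the unique sequence with a_1 = 1 and ∑_{k=1}^n a_k (k/n)⌊n/k⌋ = n^{-β} for all n ≥ 2. Then the sequence n·a_n is bounded: there exists C such that |n·a_n| ≤ C for all n ≥ 1. -/
lemma mvt_rpow (p x y : ℝ) (hx : 0 < x) (hxy : x < y) :
    ∃ c, x < c ∧ c < y ∧ y ^ p - x ^ p = p * c ^ (p - 1) * (y - x) := by
  have hcont : ContinuousOn (fun t : ℝ => t ^ p) (Set.Icc x y) := fun t ht =>
    (Real.hasDerivAt_rpow_const (Or.inl (lt_of_lt_of_le hx ht.1).ne')).continuousAt.continuousWithinAt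
  obtain ⟨c, hc, hslope⟩ := exists_hasDerivAt_eq_slope (fun t => t ^ p) (fun t => p * t ^ (p - 1))
    hxy hcont (fun t ht => Real.hasDerivAt_rpow_const (Or.inl (lt_trans hx ht.1).ne'))
  refine ⟨c, hc.1, hc.2, ?_⟩
  have hne : y - x ≠ 0 := sub_ne_zero.mpr hxy.ne'
  field_simp at hslope
  linarith [hslope]

lemma rpow_taylor_bound (β : ℝ) (hβ : 0 < β) (r : ℝ) (hr : 2 ≤ r) :
    |r ^ (1 - β) - (r - 1) ^ (1 - β) - (1 - β) * r ^ (-β)| ≤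
      (|1 - β| * β * 2 ^ (β + 1)) * r ^ (-β - 1) := by
  obtain ⟨c, hc1, hc2, hc3⟩ := mvt_rpow (1 - β) (r - 1) r (by linarith) (by linarith)
  rw [show r - (r - 1) = 1 by ring, show (1 - β) - 1 = -β by ring, mul_one] at hc3
  obtain ⟨ξ, hx1, hx2, hx3⟩ := mvt_rpow (-β) c r (by linarith) hc2
  rw [show (-β) - 1 = -β - 1 by ring] at hx3
  have key : r ^ (1 - β) - (r - 1) ^ (1 - β) - (1 - β) * r ^ (-β)
      = (1 - β) * (β * ξ ^ (-β - 1) * (r - c)) := by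
    linear_combination hc3 - (1 - β) * hx3
  rw [key, abs_mul]
  have hξpos : (0:ℝ) < ξ := by linarith
  have hXnn : (0:ℝ) ≤ ξ ^ (-β - 1) := Real.rpow_nonneg hξpos.le _
  have hrc0 : (0:ℝ) < r - c := by linarith
  have hrc1 : r - c ≤ 1 := by linarith
  have hX1 : ξ ^ (-β - 1) ≤ (r - 1) ^ (-β - 1) :=
    Real.rpow_le_rpow_of_nonpos (by linarith) (by linarith) (by linarith)
  have hX2 : (r - 1) ^ (-β - 1) ≤ (r / 2) ^ (-β - 1) :=
    Real.rpow_le_rpow_of_nonpos (by linarith) (by linarith) (by linarith)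
  have hX3 : (r / 2) ^ (-β - 1) = 2 ^ (β + 1) * r ^ (-β - 1) := by
    rw [Real.div_rpow (by linarith) (by norm_num)]
    rw [show (-β - 1) = -(β + 1) by ring, Real.rpow_neg (by norm_num : (0:ℝ) ≤ 2)]
    field_simp
  have hRnn : (0:ℝ) ≤ r ^ (-β - 1) := Real.rpow_nonneg (by linarith) _
  have h2nn : (0:ℝ) ≤ (2:ℝ) ^ (β + 1) := Real.rpow_nonneg (by norm_num) _
  have habs : |β * ξ ^ (-β - 1) * (r - c)| = β * ξ ^ (-β - 1) * (r - c) :=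
    abs_of_nonneg (by positivity)
  rw [habs]
  have hXb : ξ ^ (-β - 1) ≤ 2 ^ (β + 1) * r ^ (-β - 1) := by
    calc ξ ^ (-β - 1) ≤ (r - 1) ^ (-β - 1) := hX1
      _ ≤ (r / 2) ^ (-β - 1) := hX2
      _ = 2 ^ (β + 1) * r ^ (-β - 1) := hX3
  nlinarith [abs_nonneg (1 - β), mul_le_mul_of_nonneg_left hXb hβ.le,
    mul_le_mul_of_nonneg_left hrc1 (mul_nonneg hβ.le hXnn)]

open ArithmeticFunction in
lemma moebius_rpow_bound (β : ℝ) (hβ : 0 < β) (n : ℕ) :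
    |∑ d ∈ n.divisors, ((ArithmeticFunction.moebius (n / d) : ℤ) : ℝ) * (d : ℝ) ^ (-β)| ≤ 1 := by
  rcases Nat.eq_zero_or_pos n with rfl | hn
  · simp
  have hβ' : -β ≠ 0 := by linarith
  set Z : ArithmeticFunction ℝ := ⟨fun m => (m : ℝ) ^ (-β), by simp [Real.zero_rpow hβ']⟩ with hZdef
  have hZ : ∀ m : ℕ, Z m = (m : ℝ) ^ (-β) := fun m => by rw [hZdef]; rfl
  have hZm : Z.IsMultiplicative := by
    refine ⟨by simp [hZ], ?_⟩
    intro m k _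
    rw [hZ, hZ, hZ]
    push_cast
    exact Real.mul_rpow (by positivity) (by positivity)
  set F : ArithmeticFunction ℝ := Z * (↑(moebius) : ArithmeticFunction ℝ) with hFdef
  have hFm : F.IsMultiplicative := hZm.mul (isMultiplicative_moebius.intCast)
  have hFn : ∀ m : ℕ, F m = ∑ d ∈ m.divisors, ((ArithmeticFunction.moebius (m / d) : ℤ) : ℝ) * (d : ℝ) ^ (-β) := by
    intro m
    rw [hFdef, ArithmeticFunction.mul_apply,
      Nat.sum_divisorsAntidiagonal (fun d e => Z d * (↑(moebius) : ArithmeticFunction ℝ) e)]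
    refine Finset.sum_congr rfl fun d _ => ?_
    rw [hZ, ArithmeticFunction.intCoe_apply, mul_comm]
  -- prime power values
  have hpp : ∀ p k : ℕ, p.Prime → |F (p ^ k)| ≤ 1 := by
    intro p k hp
    rcases Nat.eq_zero_or_pos k with rfl | hk
    · simp [pow_zero, hFm.map_one]
    have hcalc : F (p ^ k) = ((p ^ k : ℕ) : ℝ) ^ (-β) - ((p ^ (k - 1) : ℕ) : ℝ) ^ (-β) := by
      rw [hFn, Nat.sum_divisors_prime_pow hp (f := fun d => ((ArithmeticFunction.moebius ((p^k) / d) : ℤ) : ℝ) * (d : ℝ) ^ (-β))]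
      rw [show k + 1 = (k - 1) + 1 + 1 by omega, Finset.sum_range_succ, Finset.sum_range_succ]
      have hzero : ∀ i ∈ Finset.range (k - 1),
          ((ArithmeticFunction.moebius ((p^k) / p^i) : ℤ) : ℝ) * ((p^i : ℕ) : ℝ) ^ (-β) = 0 := by
        intro i hi
        simp only [Finset.mem_range] at hi
        rw [Nat.pow_div (by omega) hp.pos,
          ArithmeticFunction.moebius_apply_prime_pow hp (by omega), if_neg (by omega)]
        simp
      rw [Finset.sum_eq_zero hzero, zero_add, show (k - 1) + 1 = k by omega]
      have e1 : p ^ k / p ^ (k - 1) = p := by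
        rw [Nat.pow_div (by omega) hp.pos, show k - (k - 1) = 1 by omega, pow_one]
      have e2 : p ^ k / p ^ k = 1 := Nat.div_self (pow_pos hp.pos k)
      rw [e1, e2, ArithmeticFunction.moebius_apply_prime hp, ArithmeticFunction.moebius_apply_one]
      push_cast
      ring
    rw [hcalc]
    have b1 : (1:ℝ) ≤ ((p ^ k : ℕ) : ℝ) := by exact_mod_cast Nat.one_le_pow _ _ hp.pos
    have b2 : (1:ℝ) ≤ ((p ^ (k-1) : ℕ) : ℝ) := by exact_mod_cast Nat.one_le_pow _ _ hp.pos
    have u1 : ((p ^ k : ℕ) : ℝ) ^ (-β) ≤ 1 := Real.rpow_le_one_of_one_le_of_nonpos b1 (by linarith)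
    have u2 : ((p ^ (k-1) : ℕ) : ℝ) ^ (-β) ≤ 1 := Real.rpow_le_one_of_one_le_of_nonpos b2 (by linarith)
    have l1 : (0:ℝ) ≤ ((p ^ k : ℕ) : ℝ) ^ (-β) := Real.rpow_nonneg (by positivity) _
    have l2 : (0:ℝ) ≤ ((p ^ (k-1) : ℕ) : ℝ) ^ (-β) := Real.rpow_nonneg (by positivity) _
    rw [abs_le]
    constructor <;> linarith
  rw [← hFn]
  rw [hFm.multiplicative_factorization F hn.ne']
  rw [Finsupp.prod]
  rw [Finset.abs_prod]
  refine Finset.prod_le_one (fun p _ => abs_nonneg _) fun p hp => ?_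
  have hprime : p.Prime := Nat.prime_of_mem_primeFactors (by rwa [← Nat.support_factorization])
  exact hpp p _ hprime

theorem stmt_7 (β : ℝ) (hβ : 0 < β) (a : ℕ → ℝ) (ha1 : a 1 = 1)
    (ha : ∀ n : ℕ, 2 ≤ n →
      ∑ k ∈ Finset.Icc 1 n, a k * ((k : ℝ) / n * (n / k : ℕ)) = (n : ℝ) ^ (-β)) :
    ∃ C : ℝ, ∀ n : ℕ, 1 ≤ n → |(n : ℝ) * a n| ≤ C := by
  set b : ℕ → ℝ := fun k => (k : ℝ) * a k with hbdef
  set T : ℕ → ℝ := fun n => ∑ k ∈ Finset.Icc 1 n, b k * ((n / k : ℕ) : ℝ) with hTdef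
  have hT0 : T 0 = 0 := by simp [hTdef]
  have hT : ∀ n : ℕ, 1 ≤ n → T n = (n : ℝ) ^ (1 - β) := by
    intro n hn
    rcases eq_or_lt_of_le hn with h1 | h2
    · rw [← h1]
      simp [hTdef, hbdef, ha1]
    · have hn2 : 2 ≤ n := h2
      have hnpos : (0:ℝ) < (n:ℝ) := by exact_mod_cast (by omega : 0 < n)
      have hTn : T n = (n:ℝ) * ∑ k ∈ Finset.Icc 1 n, a k * ((k : ℝ) / n * (n / k : ℕ)) := by
        rw [hTdef]
        simp only
        rw [Finset.mul_sum]
        refine Finset.sum_congr rfl fun k hk => ?_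
        simp only [hbdef]
        field_simp
      rw [hTn, ha n hn2, show (1:ℝ) - β = 1 + (-β) by ring, Real.rpow_add hnpos,
        Real.rpow_one]
  have key : ∀ n : ℕ, 0 < n → ∑ d ∈ n.divisors, b d = T n - T (n - 1) := by
    intro n hn
    have hsub : T (n-1) = ∑ k ∈ Finset.Icc 1 n, b k * (((n-1) / k : ℕ) : ℝ) := by
      rw [hTdef]
      simp only
      refine Finset.sum_subset (Finset.Icc_subset_Icc_right (by omega)) ?_
      intro k hk hk'
      simp only [Finset.mem_Icc] at hk hk'
      have hz : (n-1)/k = 0 := Nat.div_eq_of_lt (by omega)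
      rw [hz]
      simp
    have h2 : ∀ k ∈ Finset.Icc 1 n, b k * ((n / k : ℕ):ℝ) - b k * (((n-1) / k : ℕ):ℝ)
        = if k ∣ n then b k else 0 := by
      intro k hk
      have hsucc : n / k = (n-1)/k + if k ∣ n then 1 else 0 := by
        conv_lhs => rw [show n = (n-1)+1 by omega]
        rw [Nat.succ_div, show n - 1 + 1 = n by omega]
      rw [hsucc]
      by_cases hkn : k ∣ n
      · simp only [hkn, if_true]
        push_cast
        ring
      · simp only [hkn, if_false]
        push_cast
        ring
    have hfil : Finset.filter (· ∣ n) (Finset.Icc 1 n) = n.divisors := by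
      ext d
      simp only [Finset.mem_filter, Finset.mem_Icc, Nat.mem_divisors]
      constructor
      · rintro ⟨⟨hd1, hd2⟩, hd3⟩
        exact ⟨hd3, hn.ne'⟩
      · rintro ⟨hd1, _⟩
        exact ⟨⟨Nat.pos_of_dvd_of_pos hd1 hn, Nat.le_of_dvd hn hd1⟩, hd1⟩
    calc ∑ d ∈ n.divisors, b d
        = ∑ k ∈ Finset.Icc 1 n, if k ∣ n then b k else 0 := by
          rw [← hfil, Finset.sum_filter]
      _ = ∑ k ∈ Finset.Icc 1 n,
            (b k * ((n / k : ℕ):ℝ) - b k * (((n-1) / k : ℕ):ℝ)) :=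
          (Finset.sum_congr rfl h2).symm
      _ = T n - T (n-1) := by
          rw [Finset.sum_sub_distrib, ← hsub]
  have hinv := (ArithmeticFunction.sum_eq_iff_sum_smul_moebius_eq
    (f := b) (g := fun n => T n - T (n-1))).mp key
  have hrep : ∀ n : ℕ, 0 < n →
      b n = ∑ d ∈ n.divisors, ((ArithmeticFunction.moebius (n/d) : ℤ):ℝ) * (T d - T (d-1)) := by
    intro n hn
    rw [← hinv n hn,
      Nat.sum_divisorsAntidiagonal' (f := fun x y => (ArithmeticFunction.moebius x : ℤ) • (T y - T (y-1)))]
    refine Finset.sum_congr rfl fun d _ => ?_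
    rw [zsmul_eq_mul]
  set E : ℕ → ℝ := fun d => (T d - T (d-1)) - (1 - β) * (d:ℝ) ^ (-β) with hEdef
  have hEbound : ∀ d : ℕ, 2 ≤ d →
      |E d| ≤ (|1-β| * β * 2^(β+1)) * (d:ℝ) ^ (-β-1) := by
    intro d hd
    have hd1 : ((d-1:ℕ):ℝ) = (d:ℝ) - 1 := by
      push_cast [Nat.cast_sub (by omega : 1 ≤ d)]
      ring
    have h2r : (2:ℝ) ≤ (d:ℝ) := by exact_mod_cast hd
    have hlem := rpow_taylor_bound β hβ (d:ℝ) h2r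
    rw [hEdef]
    simp only
    rw [hT d (by omega), hT (d-1) (by omega), hd1]
    convert hlem using 2
  have hsum : Summable (fun d : ℕ => |E d|) := by
    rw [← summable_nat_add_iff 2]
    apply Summable.of_nonneg_of_le (fun n => abs_nonneg _)
      (fun n => hEbound (n+2) (by omega))
    apply Summable.mul_left
    exact (summable_nat_add_iff 2).mpr (Real.summable_nat_rpow.mpr (by linarith))
  have hmu : ∀ m : ℕ, |((ArithmeticFunction.moebius m : ℤ) : ℝ)| ≤ 1 := by
    intro m
    rcases eq_or_ne (ArithmeticFunction.moebius m) 0 with h | h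
    · simp [h]
    · have hsq := ArithmeticFunction.moebius_ne_zero_iff_squarefree.mp h
      rw [ArithmeticFunction.moebius_apply_of_squarefree hsq]
      push_cast
      rw [abs_pow, abs_neg, abs_one, one_pow]
  refine ⟨|1 - β| + ∑' d, |E d|, ?_⟩
  intro n hn
  have hshow : (n:ℝ) * a n = b n := by rw [hbdef]
  rw [hshow, hrep n (by omega)]
  have split : ∑ d ∈ n.divisors, ((ArithmeticFunction.moebius (n/d):ℤ):ℝ) * (T d - T (d-1))
      = (1-β) * (∑ d ∈ n.divisors, ((ArithmeticFunction.moebius (n/d):ℤ):ℝ) * (d:ℝ)^(-β))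
        + ∑ d ∈ n.divisors, ((ArithmeticFunction.moebius (n/d):ℤ):ℝ) * E d := by
    rw [Finset.mul_sum, ← Finset.sum_add_distrib]
    refine Finset.sum_congr rfl fun d _ => ?_
    rw [hEdef]
    simp only
    ring
  rw [split]
  have h1 : |(1-β) * (∑ d ∈ n.divisors, ((ArithmeticFunction.moebius (n/d):ℤ):ℝ) * (d:ℝ)^(-β))| ≤ |1-β| := by
    rw [abs_mul]
    have hM := moebius_rpow_bound β hβ n
    nlinarith [abs_nonneg (1-β), abs_nonneg (∑ d ∈ n.divisors, ((ArithmeticFunction.moebius (n/d):ℤ):ℝ) * (d:ℝ)^(-β))]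
  have h2 : |∑ d ∈ n.divisors, ((ArithmeticFunction.moebius (n/d):ℤ):ℝ) * E d| ≤ ∑' d, |E d| := by
    calc |∑ d ∈ n.divisors, ((ArithmeticFunction.moebius (n/d):ℤ):ℝ) * E d|
        ≤ ∑ d ∈ n.divisors, |((ArithmeticFunction.moebius (n/d):ℤ):ℝ) * E d| :=
          Finset.abs_sum_le_sum_abs _ _
      _ ≤ ∑ d ∈ n.divisors, |E d| := by
          refine Finset.sum_le_sum fun d _ => ?_
          rw [abs_mul]
          exact mul_le_of_le_one_left (abs_nonneg _) (hmu _)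
      _ ≤ ∑' d, |E d| := Summable.sum_le_tsum _ (fun _ _ => abs_nonneg _) hsum
  calc |(1-β) * (∑ d ∈ n.divisors, ((ArithmeticFunction.moebius (n/d):ℤ):ℝ) * (d:ℝ)^(-β))
        + ∑ d ∈ n.divisors, ((ArithmeticFunction.moebius (n/d):ℤ):ℝ) * E d|
      ≤ |(1-β) * (∑ d ∈ n.divisors, ((ArithmeticFunction.moebius (n/d):ℤ):ℝ) * (d:ℝ)^(-β))|
        + |∑ d ∈ n.divisors, ((ArithmeticFunction.moebius (n/d):ℤ):ℝ) * E d| := abs_add_le _ _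
    _ ≤ |1-β| + ∑' d, |E d| := add_le_add h1 h2
end

section
/- Let (a_n) be defined by a_1 = 1 and ∑_{k=1}^n a_k (k/n)⌊n/k⌋ = 0 for all n ≥ 2. Then for all k ≥ 1, a_{2k} = (μ(2k) - μ(k))/(2k) and a_{2k+1} = μ(2k+1)/(2k+1). -/
/-!
With `b n = n * a n` the recurrence reads `∑_{k ≤ N} b k ⌊N / k⌋ = [N = 1]` for all `N`. The left
side is `∑_{m ≤ N} ∑_{d ∣ m} b d`, so differencing in `N` gives `∑_{d ∣ m} b d = [m = 1] - [m = 2]`,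
and Möbius inversion turns this into `b n = μ n - μ (n / 2)`, the second term present only for even
`n`.
-/

open ArithmeticFunction ArithmeticFunction.Moebius Finset

theorem sum_Icc_mul_div_eq_sum_Icc_sum_divisors {R : Type*} [Semiring R] (f : ℕ → R) (N : ℕ) :
    ∑ k ∈ Icc 1 N, f k * (N / k : ℕ) = ∑ m ∈ Icc 1 N, ∑ d ∈ m.divisors, f d := by
  let F : ArithmeticFunction R := ⟨fun n => if n = 0 then 0 else f n, if_pos rfl⟩
  have hF : ∀ n ∈ Ioc 0 N, F n = f n := fun n hn => if_neg (mem_Ioc.1 hn).1.ne'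
  calc ∑ k ∈ Icc 1 N, f k * (N / k : ℕ)
      = ∑ k ∈ Ioc 0 N, F k * (N / k : ℕ) := sum_congr rfl fun k hk => by rw [hF k hk]
    _ = ∑ m ∈ Ioc 0 N, (F * zeta) m := (sum_Ioc_mul_zeta_eq_sum F N).symm
    _ = ∑ m ∈ Icc 1 N, ∑ d ∈ m.divisors, f d := sum_congr rfl fun m _ => by
        rw [coe_mul_zeta_apply]
        exact sum_congr rfl fun d hd => if_neg (Nat.pos_of_mem_divisors hd).ne'

theorem sum_divisorsAntidiagonal_mul_ite_eq {R : Type*} [Semiring R] (f : ℕ → R) {n : ℕ}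
    (hn : n ≠ 0) (m : ℕ) :
    ∑ x ∈ n.divisorsAntidiagonal, f x.1 * (if x.2 = m then 1 else 0) =
      if m ∣ n then f (n / m) else 0 := by
  rw [Nat.sum_divisorsAntidiagonal' (fun i j => f i * if j = m then 1 else 0)]
  simp [hn]

theorem eq_moebius_sub_moebius_div_two_of_sum_Icc_mul_div {R : Type*} [Ring R] (b : ℕ → R)
    (hb : ∀ N, ∑ k ∈ Icc 1 N, b k * (N / k : ℕ) = if N = 1 then 1 else 0) (n : ℕ) (hn : n ≠ 0) :
    b n = μ n - if 2 ∣ n then (μ (n / 2) : R) else 0 := by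
  have hdiv : ∀ m > 0, ∑ d ∈ m.divisors, b d =
      (if m = 1 then 1 else 0) - (if m = 2 then 1 else 0) := by
    intro m hm
    obtain ⟨m, rfl⟩ : ∃ k, m = k + 1 := ⟨m - 1, by omega⟩
    have := hb (m + 1)
    rw [sum_Icc_mul_div_eq_sum_Icc_sum_divisors, sum_Icc_succ_top (by omega),
      ← sum_Icc_mul_div_eq_sum_Icc_sum_divisors, hb m] at this
    simp only [show m + 1 = 2 ↔ m = 1 by omega]
    exact eq_sub_of_add_eq' this
  rw [← sum_eq_iff_sum_mul_moebius_eq.1 hdiv n (Nat.pos_of_ne_zero hn)]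
  simp only [mul_sub, sum_sub_distrib, sum_divisorsAntidiagonal_mul_ite_eq (fun i => (μ i : R)) hn]
  simp

theorem sum_Icc_natCast_mul_mul_div_eq_ite (a : ℕ → ℝ) (ha1 : a 1 = 1)
    (ha : ∀ n : ℕ, 2 ≤ n →
      ∑ k ∈ Icc 1 n, a k * ((k : ℝ) / n * (n / k : ℕ)) = 0) (N : ℕ) :
    ∑ k ∈ Icc 1 N, k * a k * (N / k : ℕ) = if N = 1 then 1 else 0 := by
  rcases lt_or_ge N 2 with hN | hN
  · interval_cases N <;> simp [ha1]
  have hN0 : (N : ℝ) ≠ 0 := by positivity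
  calc ∑ k ∈ Icc 1 N, k * a k * (N / k : ℕ)
      = N * ∑ k ∈ Icc 1 N, a k * ((k : ℝ) / N * (N / k : ℕ)) := by
        rw [mul_sum]
        refine sum_congr rfl fun k _ => ?_
        field_simp
    _ = if N = 1 then 1 else 0 := by rw [ha N hN, mul_zero, if_neg (by omega)]

open ArithmeticFunction ArithmeticFunction.Moebius in
theorem stmt_14 (a : ℕ → ℝ) (ha1 : a 1 = 1)
    (ha : ∀ n : ℕ, 2 ≤ n →
      ∑ k ∈ Finset.Icc 1 n, a k * ((k : ℝ) / n * (n / k : ℕ)) = 0) :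
    ∀ k : ℕ, 1 ≤ k →
      a (2 * k) = ((μ (2 * k) : ℝ) - (μ k : ℝ)) / (2 * k) ∧
      a (2 * k + 1) = (μ (2 * k + 1) : ℝ) / (2 * k + 1) := by
  intro k hk
  have hb := eq_moebius_sub_moebius_div_two_of_sum_Icc_mul_div (fun n => (n : ℝ) * a n)
    (sum_Icc_natCast_mul_mul_div_eq_ite a ha1 ha)
  have h_even := hb (2 * k) (by omega)
  have h_odd := hb (2 * k + 1) (by omega)
  rw [if_pos (dvd_mul_right 2 k), Nat.mul_div_cancel_left k two_pos] at h_even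
  rw [if_neg (by omega), sub_zero] at h_odd
  push_cast at h_even h_odd
  constructor
  · rw [eq_div_iff (by positivity), mul_comm, h_even]
  · rw [eq_div_iff (by positivity), mul_comm, h_odd]
end

section
/- For every prime p ≥ 2 and every integer n ≥ 1, -∑_{k=1}^n μ(p·k) ⌊n/k⌋ = 1 + ⌊log n / log p⌋, i.e., this sum counts the powers p^0, p^1, …, p^m ≤ n. -/
/-!
Writing `⌊n/k⌋ = #{m ≤ n : k ∣ m}` and swapping the sums, the left side is
`-∑_{m ≤ n} ∑_{d ∣ m} μ(p d)`. Since `μ(p d) = -μ(d)` for `p ∤ d` and `0` otherwise, and the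
divisors of `m` prime to `p` are those of the `p`-free part of `m`, the inner sum is `-1` when `m`
is a power of `p` and `0` otherwise. The powers of `p` up to `n` are `p^0, …, p^⌊log_p n⌋`.
-/

open ArithmeticFunction ArithmeticFunction.Moebius ArithmeticFunction.zeta Finset

namespace Nat

theorem filter_not_dvd_divisors_eq_divisors_ordCompl {p m : ℕ} (hp : p.Prime) (hm : m ≠ 0) :
    {d ∈ m.divisors | ¬p ∣ d} = (ordCompl[p] m).divisors := by
  ext d
  simp only [mem_filter, mem_divisors]
  constructor
  · rintro ⟨⟨hdm, -⟩, hpd⟩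
    have hcop : d.Coprime (p ^ m.factorization p) :=
      Coprime.pow_right _ (hp.coprime_iff_not_dvd.mpr hpd).symm
    refine ⟨hcop.dvd_of_dvd_mul_left ?_, (ordCompl_pos p hm).ne'⟩
    rwa [ordProj_mul_ordCompl_eq_self m p]
  · rintro ⟨hd, -⟩
    exact ⟨⟨hd.trans (ordCompl_dvd m p), hm⟩, fun hpd ↦ not_dvd_ordCompl hp hm (hpd.trans hd)⟩

theorem Ioc_filter_ordCompl_eq_one {p n : ℕ} (hp : p.Prime) (hn : n ≠ 0) :
    {m ∈ Ioc 0 n | ordCompl[p] m = 1} = (range (log p n + 1)).image (p ^ ·) := by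
  ext m
  simp only [mem_filter, mem_Ioc, mem_image, mem_range, Nat.lt_succ_iff]
  constructor
  · rintro ⟨⟨-, hmn⟩, hm⟩
    have hpow : p ^ m.factorization p = m := by
      simpa [hm] using ordProj_mul_ordCompl_eq_self m p
    exact ⟨_, (le_log_iff_pow_le hp.one_lt hn).mpr (hpow.le.trans hmn), hpow⟩
  · rintro ⟨j, hj, rfl⟩
    refine ⟨⟨pow_pos hp.pos j, (pow_le_pow_right₀ hp.one_le hj).trans (pow_log_le_self p hn)⟩,
      ordCompl_self_pow hp⟩

end Nat

namespace ArithmeticFunction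

variable {R : Type*} [Zero R]

def compMulLeft (f : ArithmeticFunction R) (a : ℕ) : ArithmeticFunction R :=
  ⟨fun k ↦ f (a * k), by simp⟩

@[simp]
theorem compMulLeft_apply (f : ArithmeticFunction R) (a k : ℕ) : f.compMulLeft a k = f (a * k) :=
  rfl

theorem moebius_prime_mul {p : ℕ} (hp : p.Prime) (d : ℕ) :
    μ (p * d) = if p ∣ d then 0 else -μ d := by
  split_ifs with hpd
  · refine moebius_eq_zero_of_not_squarefree fun h ↦ hp.one_lt.ne' ?_
    exact Nat.isUnit_iff.mp (h p (mul_dvd_mul_left p hpd))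
  · rw [isMultiplicative_moebius.map_mul_of_coprime (hp.coprime_iff_not_dvd.mpr hpd),
      moebius_apply_prime hp, neg_one_mul]

theorem compMulLeft_moebius_mul_zeta_apply {p m : ℕ} (hp : p.Prime) (hm : m ≠ 0) :
    (compMulLeft μ p * ζ) m = -if ordCompl[p] m = 1 then 1 else 0 := by
  have hsum : ∑ d ∈ (ordCompl[p] m).divisors, μ d = if ordCompl[p] m = 1 then 1 else 0 := by
    rw [← coe_mul_zeta_apply, moebius_mul_coe_zeta, one_apply]
  simp only [coe_mul_zeta_apply, compMulLeft_apply, moebius_prime_mul hp, sum_ite,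
    sum_const_zero, zero_add, sum_neg_distrib,
    Nat.filter_not_dvd_divisors_eq_divisors_ordCompl hp hm, hsum]

end ArithmeticFunction

open ArithmeticFunction ArithmeticFunction.Moebius in
theorem stmt_18 (p : ℕ) (hp : p.Prime) (n : ℕ) (hn : 1 ≤ n) :
    -∑ k ∈ Finset.Icc 1 n, μ (p * k) * (n / k : ℕ) =
      1 + ⌊Real.log n / Real.log p⌋ := by
  have hfloor : ⌊Real.log n / Real.log p⌋ = Nat.log p n := by
    rw [Real.log_div_log, Real.floor_logb_natCast n.cast_nonneg, Int.log_natCast]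
  have hsum : ∑ m ∈ Ioc 0 n, (compMulLeft μ p * ζ) m = -(Nat.log p n + 1 : ℤ) := by
    rw [sum_congr rfl fun m hm ↦ compMulLeft_moebius_mul_zeta_apply hp (mem_Ioc.mp hm).1.ne',
      sum_neg_distrib, ← sum_filter, Nat.Ioc_filter_ordCompl_eq_one hp (by omega), sum_const,
      card_image_of_injective _ (Nat.pow_right_injective hp.two_le), card_range]
    simp
  rw [hfloor, show Icc 1 n = Ioc 0 n from Icc_add_one_left_eq_Ioc 0 n]
  simp_rw [← compMulLeft_apply μ p]
  rw [← sum_Ioc_mul_zeta_eq_sum, hsum]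
  ring
end

section
/- For every integer n ≥ 1, ∑_{k=1}^n (-1)^{k-1} μ(k) ⌊n/k⌋ = 1 + 2⌊log n / log 2⌋. -/
/-!
Put `f k = (-1) ^ (k - 1) * μ k`. Swapping the order of summation turns the left-hand side into
`∑_{m ≤ n} (f * ζ) m`. Since `f k = μ k - 2 [2 ∣ k] μ k`, and the odd divisors of `m` are the
divisors of its odd part, Möbius inversion gives `(f * ζ) m = 2 [m is a power of 2] - [m = 1]`.
Finally, `[1, n]` contains exactly `⌊log₂ n⌋ + 1` powers of `2`.
-/

open Finset ArithmeticFunction ArithmeticFunction.Moebius ArithmeticFunction.zeta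

theorem ArithmeticFunction.sum_divisors_moebius (n : ℕ) :
    ∑ d ∈ n.divisors, (μ d : ℤ) = if n = 1 then 1 else 0 := by
  rw [← one_apply, ← moebius_mul_coe_zeta, coe_mul_zeta_apply]

namespace Nat

theorem divisors_filter_not_dvd {n p : ℕ} (hp : p.Prime) (hn : n ≠ 0) :
    {d ∈ n.divisors | ¬p ∣ d} = (ordCompl[p] n).divisors := by
  ext d
  simp only [mem_filter, mem_divisors]
  constructor
  · rintro ⟨⟨hdn, -⟩, hpd⟩
    exact ⟨dvd_ordCompl_of_dvd_not_dvd hdn hpd, (ordCompl_pos p hn).ne'⟩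
  · rintro ⟨hd, -⟩
    exact ⟨⟨hd.trans (ordCompl_dvd n p), hn⟩, fun hpd => not_dvd_ordCompl hp hn (hpd.trans hd)⟩

theorem ordCompl_eq_one_iff {n p : ℕ} (hp : p.Prime) :
    ordCompl[p] n = 1 ↔ ∃ i, p ^ i = n := by
  constructor
  · intro h
    exact ⟨n.factorization p, by simpa [h] using ordProj_mul_ordCompl_eq_self n p⟩
  · rintro ⟨i, rfl⟩
    exact ordCompl_self_pow hp

theorem card_filter_ordCompl_eq_one {p n : ℕ} (hp : p.Prime) (hn : n ≠ 0) :
    #{m ∈ Ioc 0 n | ordCompl[p] m = 1} = log p n + 1 := by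
  have : {m ∈ Ioc 0 n | ordCompl[p] m = 1} = (range (log p n + 1)).image (p ^ ·) := by
    ext m
    simp only [mem_filter, mem_Ioc, ordCompl_eq_one_iff hp, mem_image, mem_range, Nat.lt_succ_iff]
    constructor
    · rintro ⟨⟨-, hmn⟩, i, rfl⟩
      exact ⟨i, le_log_of_pow_le hp.one_lt hmn, rfl⟩
    · rintro ⟨i, hi, rfl⟩
      exact ⟨⟨pow_pos hp.pos i, pow_le_of_le_log hn hi⟩, i, rfl⟩
  rw [this, Finset.card_image_of_injective _ (Nat.pow_right_injective hp.two_le), card_range]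

end Nat

theorem neg_one_pow_sub_one_mul {R : Type*} [Ring R] {d : ℕ} (hd : d ≠ 0) (x : R) :
    (-1) ^ (d - 1) * x = x - 2 * if 2 ∣ d then x else 0 := by
  by_cases h : 2 ∣ d
  · rw [(Nat.odd_iff.mpr (by omega) : Odd (d - 1)).neg_one_pow, if_pos h]
    noncomm_ring
  · rw [(Nat.even_iff.mpr (by omega) : Even (d - 1)).neg_one_pow, if_neg h]
    simp

def altMoebius : ArithmeticFunction ℤ := ⟨fun k => (-1) ^ (k - 1) * μ k, by simp⟩

theorem altMoebius_mul_zeta_apply {n : ℕ} (hn : n ≠ 0) :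
    (altMoebius * ζ) n = 2 * (if ordCompl[2] n = 1 then 1 else 0) - if n = 1 then 1 else 0 := by
  have hodd : ∑ d ∈ n.divisors with ¬2 ∣ d, (μ d : ℤ) = if ordCompl[2] n = 1 then 1 else 0 := by
    rw [Nat.divisors_filter_not_dvd Nat.prime_two hn, sum_divisors_moebius]
  have heven : ∑ d ∈ n.divisors with 2 ∣ d, (μ d : ℤ) =
      (if n = 1 then 1 else 0) - if ordCompl[2] n = 1 then 1 else 0 := by
    rw [← hodd, ← sum_divisors_moebius n, ← sum_filter_add_sum_filter_not n.divisors (2 ∣ ·)]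
    ring
  calc (altMoebius * ζ) n = ∑ d ∈ n.divisors, ((μ d : ℤ) - 2 * if 2 ∣ d then (μ d : ℤ) else 0) :=
        coe_mul_zeta_apply.trans <| sum_congr rfl fun d hd =>
          neg_one_pow_sub_one_mul (Nat.pos_of_mem_divisors hd).ne' _
    _ = _ := by
      rw [sum_sub_distrib, ← mul_sum, ← sum_filter, heven, sum_divisors_moebius]
      ring

theorem sum_Ioc_altMoebius_mul_zeta {n : ℕ} (hn : n ≠ 0) :
    ∑ m ∈ Ioc 0 n, (altMoebius * ζ) m = 1 + 2 * Nat.log 2 n := by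
  rw [sum_congr rfl fun m hm => altMoebius_mul_zeta_apply (mem_Ioc.1 hm).1.ne', sum_sub_distrib,
    ← mul_sum, sum_boole, Nat.card_filter_ordCompl_eq_one Nat.prime_two hn, sum_ite_eq',
    if_pos (mem_Ioc.2 ⟨one_pos, Nat.one_le_iff_ne_zero.2 hn⟩)]
  push_cast
  ring

theorem floor_log_div_log_natCast (b n : ℕ) : ⌊Real.log n / Real.log b⌋ = Nat.log b n := by
  rw [Real.log_div_log, Real.floor_logb_natCast n.cast_nonneg, Int.log_natCast]

open ArithmeticFunction ArithmeticFunction.Moebius in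
theorem stmt_19 (n : ℕ) (hn : 1 ≤ n) :
    ∑ k ∈ Finset.Icc 1 n, (-1 : ℤ) ^ (k - 1) * μ k * (n / k : ℕ) =
      1 + 2 * ⌊Real.log n / Real.log 2⌋ := by
  rw [← Nat.cast_ofNat (R := ℝ) (n := 2), floor_log_div_log_natCast, ← sum_Ioc_altMoebius_mul_zeta (by omega), sum_Ioc_mul_zeta_eq_sum,
    ← Finset.Icc_add_one_left_eq_Ioc]
  rfl
end
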